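/- Let (λ, μ) be a pair of partitions for m, i.e. μ = (μ_1,...,μ_r) is a composition of m and λ = (λ_1, λ_2, ...) satisfies λ_{i+1} ≤ λ_i ≤ μ_i for all i. Define T = { e ∈ X_{J(μ)} : the sequence t of type μ with w(t) = e^{-1}w_{J(μ)} has at least λ_i good i's for every i }. Then T satisfies the Schreier property: every prefix of an element of T lies in T. -/

import Mathlib

/- Conventions as in the other statements: `S_m = Equiv.Perm (Fin m)`, 0-based, the
paper product `ab` is `b * a` in Mathlib (so `e⁻¹w_{J(μ)}` is `w0 * e⁻¹`,
the right coset `W_{J(μ)}x` is `{x * u}`, and "`d` is a prefix of `e`" is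
`invLen e = invLen d + invLen (e * d⁻¹)`); length = number of inversions; symbols of
sequences are 0-based, and `lam i` denotes the paper's `λ_{i+1}`. -/

def invLen {m : ℕ} (w : Equiv.Perm (Fin m)) : ℕ :=
  (Finset.univ.filter (fun p : Fin m × Fin m => p.1 < p.2 ∧ w p.2 < w p.1)).card

def inYoung {m : ℕ} (μ : Composition m) (u : Equiv.Perm (Fin m)) : Prop :=
  ∀ i : Fin m, μ.index (u i) = μ.index i

def isMinRep {m : ℕ} (μ : Composition m) (x : Equiv.Perm (Fin m)) : Prop :=
  ∀ u : Equiv.Perm (Fin m), inYoung μ u → invLen x ≤ invLen (x * u)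

def ofTypeL {m : ℕ} (μ : Composition m) (t : List ℕ) : Prop :=
  t.length = m ∧ (∀ a ∈ t, a < μ.length) ∧
    ∀ k : Fin μ.length, t.count (k : ℕ) = μ.blocksFun k

def seqPermVal {m : ℕ} (μ : Composition m) (t : List ℕ) (p : ℕ) : ℕ :=
  μ.sizeUpTo (t.getD p 0 + 1) - 1 - (t.take p).count (t.getD p 0)

def isSeqPerm {m : ℕ} (μ : Composition m) (t : List ℕ) (w : Equiv.Perm (Fin m)) : Prop :=
  ∀ p : Fin m, (w p : ℕ) = seqPermVal μ t (p : ℕ)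

def goodStep (g : ℕ → ℕ) (a : ℕ) : ℕ → ℕ :=
  if a = 0 ∨ g a < g (a - 1) then Function.update g a (g a + 1) else g

def goodCounts (t : List ℕ) : ℕ → ℕ :=
  t.foldl goodStep (fun _ => 0)

/-!
Induct on the length of `e * d⁻¹`. A prefix `d ≠ e` of `e` is also a prefix of `s * e` for an
adjacent transposition `s` with `ℓ(s * e) = ℓ(e) - 1`. As `e` is a minimal coset representative,
passing from `e` to `s * e` swaps two adjacent entries `x, y` of its sequence with `y < x`
(equal entries would give a shorter element of the coset), and reading `y` before `x` can only
create good entries. Hence good counts only grow along prefixes, and the sequence of `d` is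
unique.
-/

open Equiv

section Inversions

variable {m : ℕ}

def inversions (w : Perm (Fin m)) : Finset (Fin m × Fin m) :=
  Finset.univ.filter fun p => p.1 < p.2 ∧ w p.2 < w p.1

lemma invLen_eq_card_inversions (w : Perm (Fin m)) : invLen w = (inversions w).card := rfl

@[simp]
lemma mem_inversions {w : Perm (Fin m)} {p : Fin m × Fin m} :
    p ∈ inversions w ↔ p.1 < p.2 ∧ w p.2 < w p.1 := by
  simp [inversions]

lemma invLen_mul_le (x y : Perm (Fin m)) : invLen (x * y) ≤ invLen x + invLen y := by
  have hsub : inversions (x * y) ⊆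
      (inversions x).map (prodCongr y.symm y.symm).toEmbedding ∪ inversions y := by
    rintro ⟨p, q⟩ hpq
    rw [mem_inversions] at hpq
    simp only [Finset.mem_union, Finset.mem_map_equiv, prodCongr_symm, Equiv.symm_symm,
      prodCongr_apply, Prod.map, mem_inversions]
    rcases lt_or_gt_of_ne (y.injective.ne hpq.1.ne) with h | h
    · exact Or.inl ⟨h, hpq.2⟩
    · exact Or.inr ⟨hpq.1, h⟩
  calc invLen (x * y) ≤ _ := Finset.card_le_card hsub
    _ ≤ _ := Finset.card_union_le _ _
    _ = invLen x + invLen y := by rw [Finset.card_map]; rfl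

lemma invLen_inv (w : Perm (Fin m)) : invLen w⁻¹ = invLen w :=
  Finset.card_bij' (fun p _ => (w⁻¹ p.2, w⁻¹ p.1)) (fun p _ => (w p.2, w p.1))
    (fun p hp => by simp_all) (fun p hp => by simp_all) (fun p _ => by simp) (fun p _ => by simp)

lemma eq_one_of_strictMono {w : Perm (Fin m)} (hw : StrictMono w) : w = 1 :=
  DFunLike.coe_injective <| (hw.range_inj strictMono_id).1 (by simp)

lemma invLen_one : invLen (1 : Perm (Fin m)) = 0 :=
  Finset.card_eq_zero.2 (Finset.filter_eq_empty_iff.2 fun _ _ h => (h.1.trans h.2).false)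

lemma exists_adjacent_descent {w : Perm (Fin m)} (hw : w ≠ 1) :
    ∃ a b : Fin m, (b : ℕ) = a + 1 ∧ w b < w a := by
  rcases m with _ | n
  · exact absurd (Subsingleton.elim w 1) hw
  by_contra! h
  refine hw (eq_one_of_strictMono (Fin.strictMono_iff_lt_succ.2 fun i => ?_))
  exact (h _ _ (by simp)).lt_of_ne (w.injective.ne Fin.castSucc_lt_succ.ne)

end Inversions

section AdjacentSwap

variable {m : ℕ} {a b : Fin m}

lemma swap_lt_swap_iff (hab : (b : ℕ) = a + 1) {p q : Fin m}
    (hpq : (p, q) ≠ (a, b)) (hqp : (p, q) ≠ (b, a)) : swap a b p < swap a b q ↔ p < q := by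
  simp only [ne_eq, Prod.mk.injEq, Fin.ext_iff] at hpq hqp
  simp only [swap_apply_def, Fin.lt_def, Fin.ext_iff]
  split_ifs <;> omega

lemma invLen_mul_swap_of_lt (hab : (b : ℕ) = a + 1) {w : Perm (Fin m)} (h : w a < w b) :
    invLen (w * swap a b) = invLen w + 1 := by
  have hlt : a < b := Fin.lt_def.2 (by omega)
  have hinv : inversions (w * swap a b) =
      insert (a, b) ((inversions w).map (prodCongr (swap a b) (swap a b)).toEmbedding) := by
    ext ⟨p, q⟩
    simp only [Finset.mem_insert, Finset.mem_map_equiv, prodCongr_symm, symm_swap,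
      prodCongr_apply, Prod.map, mem_inversions, Perm.mul_apply]
    by_cases hpq : (p, q) = (a, b)
    · obtain ⟨rfl, rfl⟩ := Prod.mk.inj hpq
      simp [hlt, h]
    by_cases hqp : (p, q) = (b, a)
    · obtain ⟨rfl, rfl⟩ := Prod.mk.inj hqp
      simp [hlt.not_gt, h.not_gt, hlt.ne']
    rw [swap_lt_swap_iff hab hpq hqp]
    simp [hpq]
  have hnotin : (a, b) ∉ (inversions w).map (prodCongr (swap a b) (swap a b)).toEmbedding := by
    simp [hlt.not_gt]
  rw [invLen_eq_card_inversions, hinv, Finset.card_insert_of_notMem hnotin, Finset.card_map]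
  rfl

lemma invLen_swap_mul_of_lt (hab : (b : ℕ) = a + 1) {w : Perm (Fin m)} (h : w⁻¹ a < w⁻¹ b) :
    invLen (swap a b * w) = invLen w + 1 := by
  rw [← invLen_inv, mul_inv_rev, swap_inv, invLen_mul_swap_of_lt hab h, invLen_inv]

lemma invLen_swap (hab : (b : ℕ) = a + 1) : invLen (swap a b) = 1 := by
  simpa [invLen_one] using
    invLen_mul_swap_of_lt hab (w := 1) (by simpa using Fin.lt_def.2 (by omega))

lemma exists_invLen_swap_mul_lt {w : Perm (Fin m)} (hw : w ≠ 1) :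
    ∃ a b : Fin m, (b : ℕ) = a + 1 ∧ invLen (swap a b * w) < invLen w := by
  obtain ⟨a, b, hab, h⟩ := exists_adjacent_descent (inv_ne_one.2 hw)
  refine ⟨a, b, hab, ?_⟩
  have := invLen_swap_mul_of_lt hab (w := swap a b * w) (by simpa [mul_inv_rev] using h)
  rw [← mul_assoc, swap_mul_self, one_mul] at this
  omega

end AdjacentSwap

section Prefix

variable {m : ℕ}

def IsPrefix (d e : Perm (Fin m)) : Prop :=
  invLen e = invLen d + invLen (e * d⁻¹)

lemma exists_swap_mul_isPrefix {d e : Perm (Fin m)} (hde : IsPrefix d e) (hne : e ≠ d) :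
    ∃ a b : Fin m, (b : ℕ) = a + 1 ∧ IsPrefix (swap a b * e) e ∧ IsPrefix d (swap a b * e) ∧
      invLen (swap a b * e * d⁻¹) < invLen (e * d⁻¹) := by
  obtain ⟨a, b, hab, hlt⟩ := exists_invLen_swap_mul_lt (mt mul_inv_eq_one.1 hne)
  have h₁ : invLen (swap a b * e) ≤ invLen (swap a b * e * d⁻¹) + invLen d := by
    simpa using invLen_mul_le (swap a b * e * d⁻¹) d
  have h₂ : invLen e ≤ invLen (swap a b) + invLen (swap a b * e) := by
    simpa [← mul_assoc] using invLen_mul_le (swap a b) (swap a b * e)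
  have hs : e * (swap a b * e)⁻¹ = swap a b := by simp [mul_inv_rev]
  rw [← mul_assoc] at hlt
  refine ⟨a, b, hab, ?_, ?_, hlt⟩ <;> unfold IsPrefix at * <;> rw [hs, invLen_swap hab] at * <;>
    omega

end Prefix

namespace Composition

lemma monotone_index {m : ℕ} (μ : Composition m) : Monotone μ.index := by
  intro p q hpq
  by_contra! h
  have h₁ := μ.lt_sizeUpTo_index_succ q
  have h₂ := μ.sizeUpTo_index_le p
  have h₃ := μ.monotone_sizeUpTo (show (μ.index q : ℕ) + 1 ≤ μ.index p from h)
  have : (p : ℕ) ≤ q := hpq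
  simp only [Fin.val_succ] at h₁
  omega

end Composition

section Young

variable {m : ℕ} {μ : Composition m}

lemma inYoung_swap {p q : Fin m} (h : μ.index p = μ.index q) : inYoung μ (swap p q) := by
  intro i
  rcases eq_or_ne i p with rfl | hp
  · simp [h]
  rcases eq_or_ne i q with rfl | hq
  · simp [h]
  · rw [swap_apply_of_ne_of_ne hp hq]

lemma isMinRep_of_isPrefix {d e : Perm (Fin m)} (he : isMinRep μ e) (hde : IsPrefix d e) :
    isMinRep μ d := by
  intro u hu
  have h₁ := he u hu
  have h₂ : invLen (e * u) ≤ invLen (e * d⁻¹) + invLen (d * u) := by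
    simpa [mul_assoc] using invLen_mul_le (e * d⁻¹) (d * u)
  unfold IsPrefix at hde
  omega

lemma index_lt_of_invLen_swap_mul_lt {e : Perm (Fin m)} (he : isMinRep μ e) {a b : Fin m}
    (hab : (b : ℕ) = a + 1) (h : invLen (swap a b * e) < invLen e) :
    μ.index (e⁻¹ b) < μ.index (e⁻¹ a) := by
  have hba : e⁻¹ b < e⁻¹ a := by
    refine lt_of_le_of_ne (not_lt.1 fun hlt => ?_) (e⁻¹.injective.ne (Fin.ne_of_val_ne ?_))
    · rw [invLen_swap_mul_of_lt hab hlt] at h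
      omega
    · omega
  refine lt_of_le_of_ne (μ.monotone_index hba.le) fun hidx => ?_
  -- otherwise right multiplication by a transposition of the Young subgroup would shorten `e`
  have := he _ (inYoung_swap hidx)
  rw [mul_swap_eq_swap_mul] at this
  simp only [Perm.coe_inv, apply_symm_apply, swap_comm b a] at this
  omega

end Young

lemma List.count_take_lt_count {α : Type*} [BEq α] [LawfulBEq α] (l : List α) {p : ℕ}
    (hp : p < l.length) : (l.take p).count l[p] < l.count l[p] := by
  have h : l.count l[p] = (l.take p).count l[p] + (l.drop p).count l[p] := by
    rw [← List.count_append, List.take_append_drop]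
  rw [h, List.drop_eq_getElem_cons hp, List.count_cons_self]
  omega

lemma List.exists_eq_append_cons_cons {α : Type*} (l : List α) {j : ℕ}
    (hj : j + 1 < l.length) :
    ∃ A x y B, l = A ++ x :: y :: B ∧ A.length = j := by
  refine ⟨l.take j, l[j], l[j + 1], l.drop (j + 2), ?_, by simp; omega⟩
  conv_lhs => rw [← l.take_append_drop j, List.drop_eq_getElem_cons (by omega),
    List.drop_eq_getElem_cons hj]

section Sequences

variable {m : ℕ} {μ : Composition m} {t t' : List ℕ} {w : Perm (Fin m)}

lemma getD_lt_length_of_ofTypeL (ht : ofTypeL μ t) (p : Fin m) : t.getD p 0 < μ.length := by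
  have hp : (p : ℕ) < t.length := ht.1 ▸ p.2
  rw [List.getD_eq_getElem _ _ hp]
  exact ht.2.1 _ (List.getElem_mem hp)

lemma index_apply_of_isSeqPerm (ht : ofTypeL μ t) (htw : isSeqPerm μ t w) (p : Fin m) :
    (μ.index (w p) : ℕ) = t.getD p 0 := by
  set k : Fin μ.length := ⟨t.getD p 0, getD_lt_length_of_ofTypeL ht p⟩
  have hp : (p : ℕ) < t.length := ht.1 ▸ p.2
  have hcount : (t.take p).count (t.getD p 0) < μ.blocksFun k := by
    rw [← ht.2.2 k]
    simpa only [k, List.getD_eq_getElem _ _ hp] using t.count_take_lt_count hp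
  have hsize : μ.sizeUpTo (k + 1) = μ.sizeUpTo k + μ.blocksFun k := μ.sizeUpTo_succ' k
  have hw : (w p : ℕ) = μ.sizeUpTo (k + 1) - 1 - (t.take p).count (t.getD p 0) := htw p
  have hmem : w p ∈ Set.range (μ.embedding k) :=
    μ.mem_range_embedding_iff.2 ⟨by omega, show _ < μ.sizeUpTo (k + 1) by omega⟩
  rw [← μ.mem_range_embedding_iff'.1 hmem]

lemma eq_of_isSeqPerm (ht : ofTypeL μ t) (htw : isSeqPerm μ t w) (ht' : ofTypeL μ t')
    (htw' : isSeqPerm μ t' w) : t = t' := by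
  refine List.ext_getElem (ht.1.trans ht'.1.symm) fun p hp hp' => ?_
  have := (index_apply_of_isSeqPerm ht htw ⟨p, ht.1 ▸ hp⟩).symm.trans
    (index_apply_of_isSeqPerm ht' htw' ⟨p, ht.1 ▸ hp⟩)
  rwa [List.getD_eq_getElem _ _ hp, List.getD_eq_getElem _ _ hp'] at this

lemma ofTypeL_of_perm (h : t.Perm t') (ht : ofTypeL μ t) : ofTypeL μ t' :=
  ⟨h.length_eq ▸ ht.1, fun x hx => ht.2.1 x (h.mem_iff.2 hx), fun k => h.count_eq _ ▸ ht.2.2 k⟩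

end Sequences

section SequenceSwap

variable {m : ℕ} (μ : Composition m) (A B : List ℕ) {x y : ℕ}

lemma seqPermVal_append_cons_cons_length (hxy : x ≠ y) :
    seqPermVal μ (A ++ x :: y :: B) A.length =
      seqPermVal μ (A ++ y :: x :: B) (A.length + 1) := by
  have h₁ : (A ++ x :: y :: B).take A.length = A := by simp
  have h₂ : (A ++ y :: x :: B).take (A.length + 1) = A ++ [y] := by simp [List.take_append]
  simp [seqPermVal, h₁, h₂, List.getD_eq_getElem?_getD, hxy.symm]

lemma seqPermVal_append_cons_cons_of_ne {p : ℕ} (hp₁ : p ≠ A.length) (hp₂ : p ≠ A.length + 1) :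
    seqPermVal μ (A ++ x :: y :: B) p = seqPermVal μ (A ++ y :: x :: B) p := by
  rcases lt_or_gt_of_ne hp₁ with hp | hp
  · simp [seqPermVal, List.getElem?_append_left hp, List.take_append,
      Nat.sub_eq_zero_of_le hp.le]
  · obtain ⟨q, rfl⟩ : ∃ q, p = A.length + 2 + q := ⟨p - A.length - 2, by omega⟩
    simp [seqPermVal, List.take_append, List.getD_eq_getElem?_getD, List.getElem?_append_right,
      List.count_cons, Nat.add_assoc, Nat.add_comm 2 q]
    omega

lemma isSeqPerm_mul_swap {w : Perm (Fin m)} {a b : Fin m} (ha : A.length = a)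
    (hab : (b : ℕ) = a + 1) (hxy : x ≠ y) (htw : isSeqPerm μ (A ++ y :: x :: B) w) :
    isSeqPerm μ (A ++ x :: y :: B) (w * swap a b) := by
  intro p
  rw [Perm.mul_apply, htw]
  rcases eq_or_ne p a with rfl | hpa
  · rw [swap_apply_left, hab, ← ha, seqPermVal_append_cons_cons_length μ A B hxy]
  rcases eq_or_ne p b with rfl | hpb
  · rw [swap_apply_right, hab, ← ha, seqPermVal_append_cons_cons_length μ A B hxy.symm]
  rw [swap_apply_of_ne_of_ne hpa hpb, seqPermVal_append_cons_cons_of_ne μ A B]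
  · exact fun h => hpa (Fin.ext (h.trans ha))
  · exact fun h => hpb (Fin.ext (by omega))

end SequenceSwap

section GoodCounts

lemma goodStep_apply_of_ne (g : ℕ → ℕ) {a i : ℕ} (hi : i ≠ a) : goodStep g a i = g i := by
  unfold goodStep
  split_ifs <;> simp [Function.update_of_ne hi]

lemma goodStep_apply_self (g : ℕ → ℕ) (a : ℕ) :
    goodStep g a a = if a = 0 ∨ g a < g (a - 1) then g a + 1 else g a := by
  unfold goodStep
  split_ifs <;> simp

lemma le_goodStep (g : ℕ → ℕ) (a : ℕ) : g ≤ goodStep g a := by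
  intro i
  show g i ≤ goodStep g a i
  rcases eq_or_ne i a with rfl | hi
  · rw [goodStep_apply_self]
    split_ifs <;> omega
  · rw [goodStep_apply_of_ne _ hi]

lemma goodStep_mono {g h : ℕ → ℕ} (hgh : g ≤ h) (a : ℕ) : goodStep g a ≤ goodStep h a := by
  intro i
  show goodStep g a i ≤ goodStep h a i
  rcases eq_or_ne i a with rfl | hi
  · have : g i ≤ h i := hgh i
    have : g (i - 1) ≤ h (i - 1) := hgh (i - 1)
    rw [goodStep_apply_self, goodStep_apply_self]
    split_ifs <;> omega
  · rw [goodStep_apply_of_ne _ hi, goodStep_apply_of_ne _ hi]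
    exact hgh i

lemma foldl_goodStep_mono (l : List ℕ) {g h : ℕ → ℕ} (hgh : g ≤ h) :
    l.foldl goodStep g ≤ l.foldl goodStep h := by
  induction l generalizing g h with
  | nil => exact hgh
  | cons a l ih => exact ih (goodStep_mono hgh a)

lemma goodStep_goodStep_le_of_lt (g : ℕ → ℕ) {x y : ℕ} (hyx : y < x) :
    goodStep (goodStep g x) y ≤ goodStep (goodStep g y) x := by
  intro i
  show goodStep (goodStep g x) y i ≤ goodStep (goodStep g y) x i
  rcases eq_or_ne i y with rfl | hiy
  · rw [goodStep_apply_self, goodStep_apply_of_ne _ hyx.ne, goodStep_apply_of_ne _ hyx.ne,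
      goodStep_apply_of_ne _ (by omega), goodStep_apply_self]
  rcases eq_or_ne i x with rfl | hix
  · have : g (i - 1) ≤ goodStep g y (i - 1) := le_goodStep g y (i - 1)
    rw [goodStep_apply_of_ne _ hiy, goodStep_apply_self, goodStep_apply_self,
      goodStep_apply_of_ne _ hiy]
    split_ifs <;> omega
  · simp only [goodStep_apply_of_ne _ hix, goodStep_apply_of_ne _ hiy, le_refl]

lemma goodCounts_append_swap_le (A B : List ℕ) {x y : ℕ} (hyx : y < x) :
    goodCounts (A ++ x :: y :: B) ≤ goodCounts (A ++ y :: x :: B) := by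
  simp only [goodCounts, List.foldl_append, List.foldl_cons]
  exact foldl_goodStep_mono B (goodStep_goodStep_le_of_lt _ hyx)

end GoodCounts

section Schreier

variable {m : ℕ} {μ : Composition m} {w0 e : Perm (Fin m)} {t : List ℕ}

lemma exists_seq_swap_mul (hw0 : inYoung μ w0) (he : isMinRep μ e) {a b : Fin m}
    (hab : (b : ℕ) = a + 1) (hpre : IsPrefix (swap a b * e) e) (ht : ofTypeL μ t)
    (htw : isSeqPerm μ t (w0 * e⁻¹)) :
    ∃ t₁, ofTypeL μ t₁ ∧ isSeqPerm μ t₁ (w0 * (swap a b * e)⁻¹) ∧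
      goodCounts t ≤ goodCounts t₁ := by
  have hlt : invLen (swap a b * e) < invLen e := by
    have hs : e * (swap a b * e)⁻¹ = swap a b := by simp [mul_inv_rev]
    unfold IsPrefix at hpre
    rw [hs, invLen_swap hab] at hpre
    omega
  obtain ⟨A, x, y, B, rfl, hA⟩ := t.exists_eq_append_cons_cons (j := a) (by rw [ht.1]; omega)
  have hx : (μ.index (e⁻¹ a) : ℕ) = x := by
    simpa [hw0 _, ← hA, List.getD_eq_getElem?_getD] using index_apply_of_isSeqPerm ht htw a
  have hy : (μ.index (e⁻¹ b) : ℕ) = y := by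
    simpa [hw0 _, hab, ← hA, List.getD_eq_getElem?_getD] using
      index_apply_of_isSeqPerm ht htw b
  have hyx : y < x := hx ▸ hy ▸ index_lt_of_invLen_swap_mul_lt he hab hlt
  refine ⟨A ++ y :: x :: B, ofTypeL_of_perm (.append_left A (.swap _ _ _)) ht, ?_,
    goodCounts_append_swap_le A B hyx⟩
  rw [mul_inv_rev, swap_inv, ← mul_assoc]
  exact isSeqPerm_mul_swap μ A B hA hab hyx.ne htw

lemma exists_seq_le_of_isPrefix (hw0 : inYoung μ w0) {d : Perm (Fin m)} (he : isMinRep μ e)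
    (hde : IsPrefix d e) (ht : ofTypeL μ t) (htw : isSeqPerm μ t (w0 * e⁻¹)) :
    ∃ t', ofTypeL μ t' ∧ isSeqPerm μ t' (w0 * d⁻¹) ∧ goodCounts t ≤ goodCounts t' := by
  induction hn : invLen (e * d⁻¹) using Nat.strong_induction_on generalizing e t with
  | _ n ih =>
  obtain rfl | hne := eq_or_ne e d
  · exact ⟨t, ht, htw, le_rfl⟩
  obtain ⟨a, b, hab, hpre, hde₁, hlt⟩ := exists_swap_mul_isPrefix hde hne
  obtain ⟨t₁, ht₁, htw₁, hle₁⟩ := exists_seq_swap_mul hw0 he hab hpre ht htw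
  obtain ⟨t', ht', htw', hle'⟩ :=
    ih _ (hn ▸ hlt) (isMinRep_of_isPrefix he hpre) hde₁ ht₁ htw₁ rfl
  exact ⟨t', ht', htw', hle₁.trans hle'⟩

end Schreier

theorem stmt8_general (m : ℕ) (μ : Composition m) (lam : ℕ → ℕ)
    (w0 e d : Equiv.Perm (Fin m))
    (hw0 : inYoung μ w0)
    (he : isMinRep μ e)
    (t : List ℕ) (ht : ofTypeL μ t) (htw : isSeqPerm μ t (w0 * e⁻¹))
    (hgood : ∀ i, lam i ≤ goodCounts t i)
    (hpre : invLen e = invLen d + invLen (e * d⁻¹)) :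
    isMinRep μ d ∧
      ∀ t' : List ℕ, ofTypeL μ t' → isSeqPerm μ t' (w0 * d⁻¹) →
        ∀ i, lam i ≤ goodCounts t' i := by
  refine ⟨isMinRep_of_isPrefix he hpre, fun t' ht' htw' i => ?_⟩
  obtain ⟨t₁, ht₁, htw₁, hle⟩ := exists_seq_le_of_isPrefix hw0 he hpre ht htw
  rw [eq_of_isSeqPerm ht' htw' ht₁ htw₁]
  exact (hgood i).trans (hle i)

/-- let `(λ, μ)` be a pair of partitions for `m` and let
`T = {e ∈ X_{J(μ)} : the sequence t with w(t) = e⁻¹w_{J(μ)} has ≥ λ_i good i's ∀ i}`.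
Then `T` has the Schreier property: every prefix `d` of an element `e ∈ T` lies in `T`
(i.e. `d ∈ X_{J(μ)}` and its sequence `t'` has at least `λ_i` good `i`'s for all `i`). -/
theorem stmt8 (m : ℕ) (μ : Composition m) (lam : ℕ → ℕ)
    (hpair : ∀ i, lam (i + 1) ≤ lam i ∧ lam i ≤ μ.blocks.getD i 0)
    (w0 e d : Equiv.Perm (Fin m))
    (hw0 : inYoung μ w0) (hw0max : ∀ u, inYoung μ u → invLen u ≤ invLen w0)
    (he : isMinRep μ e)
    (t : List ℕ) (ht : ofTypeL μ t) (htw : isSeqPerm μ t (w0 * e⁻¹))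
    (hgood : ∀ i, lam i ≤ goodCounts t i)
    (hpre : invLen e = invLen d + invLen (e * d⁻¹)) :
    isMinRep μ d ∧
      ∀ t' : List ℕ, ofTypeL μ t' → isSeqPerm μ t' (w0 * d⁻¹) →
        ∀ i, lam i ≤ goodCounts t' i :=
  stmt8_general m μ lam w0 e d hw0 he t ht htw hgood hpre
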